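/- arXiv:1603.02727 — 2 statements merged into one kernel-verified Lean document; each statement's English description precedes it below -/
import Mathlib

section
/- In dimension d = 2: let P_q be a query point and P_1, ..., P_t points such that for every pair (i, j), the minimum bounding rectangle of {P_i, P_j} has minimum distance to P_q greater than theta. Then the minimum bounding rectangle of the entire set {P_1, ..., P_t} also has minimum distance to P_q greater than theta. -/
noncomputable def dstMin {d : ℕ} (P l u : EuclideanSpace ℝ (Fin d)) : ℝ :=
  Real.sqrt (∑ i, max (l i - P i) (max 0 (P i - u i)) ^ 2)

/-!
The distance from `P_q` to a box is the distance to its point `p` nearest to `P_q`, and a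
sub-box that still contains `p` is no farther away. Since `p` lies in the bounding box of the family, in the
plane it already lies in the bounding box of two of the points.
-/

open Set

def intervalGap (x l u : ℝ) : ℝ := max (l - x) (max 0 (x - u))

lemma intervalGap_nonneg (x l u : ℝ) : 0 ≤ intervalGap x l u :=
  (le_max_left 0 _).trans (le_max_right _ _)

lemma intervalGap_le_of_clamp_mem {x l u a b : ℝ} (h : max l (min x u) ∈ Icc a b) :
    intervalGap x a b ≤ intervalGap x l u := by
  obtain ⟨ha, hb⟩ := h
  simp only [intervalGap, max_def, min_def] at *
  split_ifs at * <;> linarith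

lemma dstMin_le_dstMin {d : ℕ} {P l u l' u' : EuclideanSpace ℝ (Fin d)}
    (h : ∀ i, intervalGap (P i) (l' i) (u' i) ≤ intervalGap (P i) (l i) (u i)) :
    dstMin P l' u' ≤ dstMin P l u :=
  Real.sqrt_le_sqrt <| Finset.sum_le_sum fun i _ =>
    pow_le_pow_left₀ (intervalGap_nonneg _ _ _) (h i) 2

-- The analogue with three coordinates is false.
lemma exists_pair_mem_uIcc_of_exists_le_ge {ι : Type*} (f g : ι → ℝ) {p q : ℝ}
    (hf : ∃ i, f i ≤ p) (hf' : ∃ i, p ≤ f i) (hg : ∃ i, g i ≤ q) (hg' : ∃ i, q ≤ g i) :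
    ∃ i j, p ∈ uIcc (f i) (f j) ∧ q ∈ uIcc (g i) (g j) := by
  obtain ⟨a, hfa⟩ := hf
  obtain ⟨b, hfb⟩ := hf'
  rcases le_total (g a) q with hga | hga
  · obtain ⟨c, hgc⟩ := hg'
    rcases le_total p (f c) with hfc | hfc
    · exact ⟨a, c, mem_uIcc_of_le hfa hfc, mem_uIcc_of_le hga hgc⟩
    rcases le_total q (g b) with hgb | hgb
    · exact ⟨a, b, mem_uIcc_of_le hfa hfb, mem_uIcc_of_le hga hgb⟩
    · exact ⟨c, b, mem_uIcc_of_le hfc hfb, mem_uIcc_of_ge hgb hgc⟩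
  · obtain ⟨c, hgc⟩ := hg
    rcases le_total p (f c) with hfc | hfc
    · exact ⟨a, c, mem_uIcc_of_le hfa hfc, mem_uIcc_of_ge hgc hga⟩
    rcases le_total (g b) q with hgb | hgb
    · exact ⟨a, b, mem_uIcc_of_le hfa hfb, mem_uIcc_of_ge hgb hga⟩
    · exact ⟨c, b, mem_uIcc_of_le hfc hfb, mem_uIcc_of_le hgc hgb⟩

/-- Clique-to-DBH theorem in dimension 2: if every pairwise minimum bounding
rectangle of a finite family of points is at distance `> θ` from `P_q`, then so
is the minimum bounding rectangle of the whole family. -/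
theorem stmt_4 {ι : Type*} [Fintype ι] [Nonempty ι]
    (P_q : EuclideanSpace ℝ (Fin 2)) (P : ι → EuclideanSpace ℝ (Fin 2)) (θ : ℝ)
    (hpair : ∀ i j : ι,
      θ < dstMin P_q (WithLp.toLp 2 (fun c => min (P i c) (P j c))) (WithLp.toLp 2 (fun c => max (P i c) (P j c)))) :
    θ < dstMin P_q
      (WithLp.toLp 2 (fun c => Finset.univ.inf' Finset.univ_nonempty (fun k => P k c)))
      (WithLp.toLp 2 (fun c => Finset.univ.sup' Finset.univ_nonempty (fun k => P k c))) := by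
  set L : Fin 2 → ℝ := fun c => Finset.univ.inf' Finset.univ_nonempty (fun k => P k c)
  set U : Fin 2 → ℝ := fun c => Finset.univ.sup' Finset.univ_nonempty (fun k => P k c)
  set clamp : Fin 2 → ℝ := fun c => max (L c) (min (P_q c) (U c))
  have below (c : Fin 2) : ∃ k, P k c ≤ clamp c := by
    obtain ⟨k, -, hk⟩ := (Finset.inf'_le_iff _).1 (le_refl (L c))
    exact ⟨k, hk.trans (le_max_left _ _)⟩
  have above (c : Fin 2) : ∃ k, clamp c ≤ P k c := by
    obtain ⟨k, -, hk⟩ := (Finset.le_sup'_iff _).1 (le_refl (U c))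
    exact ⟨k, max_le (Finset.inf'_le _ (Finset.mem_univ k)) ((min_le_right _ _).trans hk)⟩
  obtain ⟨i, j, h0, h1⟩ := exists_pair_mem_uIcc_of_exists_le_ge (fun k => P k 0) (fun k => P k 1)
    (below 0) (above 0) (below 1) (above 1)
  exact (hpair i j).trans_le <| dstMin_le_dstMin <| Fin.forall_fin_two.2
    ⟨intervalGap_le_of_clamp_mem h0, intervalGap_le_of_clamp_mem h1⟩
end

section
/- The clique-to-DBH property fails in dimension d >= 3: there exist a query point P_q, a threshold theta > 0, and three points v_i, v_j, v_k in R^3 such that the minimum bounding hyper-rectangles of each pair {v_i,v_j}, {v_i,v_k}, {v_j,v_k} all have minimum distance to P_q greater than theta, yet the minimum bounding hyper-rectangle of {v_i, v_j, v_k} has minimum distance to P_q at most theta. -/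
section DstMin

variable {d : ℕ} {P l u : EuclideanSpace ℝ (Fin d)}

theorem dstMin_eq_zero_of_mem (hl : ∀ i, l i ≤ P i) (hu : ∀ i, P i ≤ u i) :
    dstMin P l u = 0 := by
  have hterm : ∀ i, max (l i - P i) (max 0 (P i - u i)) = 0 := fun i => by
    simp [hl i, hu i]
  simp [dstMin, hterm]

theorem le_dstMin_of_le_sub_lower (i : Fin d) {r : ℝ} (hr : 0 ≤ r) (h : r ≤ l i - P i) :
    r ≤ dstMin P l u := by
  unfold dstMin
  rw [Real.le_sqrt hr (Finset.sum_nonneg fun _ _ => sq_nonneg _)]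
  calc r ^ 2 ≤ max (l i - P i) (max 0 (P i - u i)) ^ 2 :=
        pow_le_pow_left₀ hr (h.trans (le_max_left _ _)) 2
    _ ≤ ∑ j, max (l j - P j) (max 0 (P j - u j)) ^ 2 :=
        Finset.single_le_sum (f := fun j => max (l j - P j) (max 0 (P j - u j)) ^ 2)
          (fun _ _ => sq_nonneg _) (Finset.mem_univ i)

end DstMin

/-- The clique-to-DBH property fails in dimension 3: there is a counterexample
where all three pairwise MBHs are DBHs but the MBH of the triple is not. -/
theorem stmt_5 :
    ∃ (P_q vi vj vk : EuclideanSpace ℝ (Fin 3)) (θ : ℝ), 0 < θ ∧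
      (θ < dstMin P_q (WithLp.toLp 2 (fun c => min (vi c) (vj c))) (WithLp.toLp 2 (fun c => max (vi c) (vj c)))) ∧
      (θ < dstMin P_q (WithLp.toLp 2 (fun c => min (vi c) (vk c))) (WithLp.toLp 2 (fun c => max (vi c) (vk c)))) ∧
      (θ < dstMin P_q (WithLp.toLp 2 (fun c => min (vj c) (vk c))) (WithLp.toLp 2 (fun c => max (vj c) (vk c)))) ∧
      dstMin P_q (WithLp.toLp 2 (fun c => min (vi c) (min (vj c) (vk c))))
        (WithLp.toLp 2 (fun c => max (vi c) (max (vj c) (vk c)))) ≤ θ := by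
  refine ⟨0, !₂[1, 1, -1], !₂[1, -1, 1], !₂[-1, 1, 1], 1 / 2, by norm_num, ?_, ?_, ?_, ?_⟩
  · exact (by norm_num : (1 / 2 : ℝ) < 1).trans_le (le_dstMin_of_le_sub_lower 0 zero_le_one (by simp))
  · exact (by norm_num : (1 / 2 : ℝ) < 1).trans_le (le_dstMin_of_le_sub_lower 1 zero_le_one (by simp))
  · exact (by norm_num : (1 / 2 : ℝ) < 1).trans_le (le_dstMin_of_le_sub_lower 2 zero_le_one (by simp))
  · rw [dstMin_eq_zero_of_mem (fun i => by fin_cases i <;> simp) (fun i => by fin_cases i <;> simp)]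
    norm_num
end
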